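/- Let k be odd and q = 5^k, and let c ∈ F_q. The discriminant of the quadratic z^2 - (2c^2 + c + 1)z + (-2c^4 + 2c^3 - c^2 + c + 2) in z equals 2(c^2 - c - 2)^2 in F_q; consequently, if c^2 - c - 2 ≠ 0 then this quadratic has no root in F_q. -/

import Mathlib

/-!
Over a field of characteristic 5 the discriminant collapses to `2 (c² - c - 2)²`. A root `z`
would make `2` a square, with square root `(2z - (2c² + c + 1)) / (c² - c - 2)`; but `2` is
not a square in `𝔽_q` since `q = 5^k ≡ 5 (mod 8)` for odd `k`.
-/

theorem Nat.cast_eq_zero_of_card_eq_pow {R : Type*} [Ring R] [IsReduced R] [Fintype R]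
    {p k : ℕ} (hR : Fintype.card R = p ^ k) : (p : R) = 0 :=
  eq_zero_of_pow_eq_zero (n := k) <| by exact_mod_cast hR ▸ Nat.cast_card_eq_zero R

theorem Nat.five_pow_mod_eight_of_odd {k : ℕ} (hk : Odd k) : 5 ^ k % 8 = 5 := by
  obtain ⟨m, rfl⟩ := hk
  rw [pow_succ, pow_mul, Nat.mul_mod, Nat.pow_mod]
  norm_num

theorem isSquare_of_discrim_eq_mul_sq {K : Type*} [Field K] {a b c d s x : K} (hs : s ≠ 0)
    (hd : discrim a b c = d * s ^ 2) (hx : a * (x * x) + b * x + c = 0) : IsSquare d :=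
  ⟨(2 * a * x + b) / s, by
    rw [div_mul_div_comm, eq_div_iff (mul_ne_zero hs hs), ← sq, ← sq,
      ← discrim_eq_sq_of_quadratic_eq_zero hx, hd]⟩

theorem discrim_eq_two_mul_sq_of_five_eq_zero {R : Type*} [CommRing R] (h5 : (5 : R) = 0)
    (c : R) :
    (2 * c ^ 2 + c + 1) ^ 2 - 4 * (-2 * c ^ 4 + 2 * c ^ 3 - c ^ 2 + c + 2)
      = 2 * (c ^ 2 - c - 2) ^ 2 := by
  linear_combination (2 * c ^ 4 + 3 * c ^ 2 - 2 * c - 3) * h5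

theorem disc_computation (k : ℕ) (hk : Odd k)
    (F : Type*) [Field F] [Fintype F] (hF : Fintype.card F = 5 ^ k) (c : F) :
    (2 * c ^ 2 + c + 1) ^ 2 - 4 * (-2 * c ^ 4 + 2 * c ^ 3 - c ^ 2 + c + 2)
      = 2 * (c ^ 2 - c - 2) ^ 2 ∧
    (c ^ 2 - c - 2 ≠ 0 →
      ¬ ∃ z : F, z ^ 2 - (2 * c ^ 2 + c + 1) * z
        + (-2 * c ^ 4 + 2 * c ^ 3 - c ^ 2 + c + 2) = 0) := by
  have h5 : (5 : F) = 0 := by exact_mod_cast Nat.cast_eq_zero_of_card_eq_pow hF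
  have hdisc := discrim_eq_two_mul_sq_of_five_eq_zero h5 c
  refine ⟨hdisc, fun hc ⟨z, hz⟩ => ?_⟩
  have hsq : IsSquare (2 : F) :=
    isSquare_of_discrim_eq_mul_sq (a := 1) (b := -(2 * c ^ 2 + c + 1))
      (c := -2 * c ^ 4 + 2 * c ^ 3 - c ^ 2 + c + 2) (x := z) hc
      (by rw [discrim]; linear_combination hdisc) (by linear_combination hz)
  rw [FiniteField.isSquare_two_iff, hF, Nat.five_pow_mod_eight_of_odd hk] at hsq
  exact hsq.2 rfl
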